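/- Let ε > 0, τ > 0, and 0 < γ < τ satisfy ε ≤ 1/2 − τ + γ, and set α = 1/2 − τ + γ (note 0 < α < 1/2) and β = min(γ, 0.05·ε²). There exists p₀ such that for every prime p ≥ p₀ with p ≡ 1 (mod 4) the following holds: if the Paley ETF Φ_p has the (p^{1/2+ε}, p^{−τ})-RIP, then for any two independent sources X and Y on F_p, each with min-entropy at least α·n where n = ⌈log₂ p⌉, one has |Pr[Ext_p(X,Y) = 1] − 1/2| ≤ 2·p^{−β} + p^{−α}/2. -/

import Mathlib

open scoped Classical
open Finset

noncomputable section

/-- The quadratic character `χ` of `F_p`: `χ 0 = 0`, `χ x = 1` if `x` is a nonzero square,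
and `χ x = -1` otherwise. -/
def quadChar (p : ℕ) (x : ZMod p) : ℤ :=
  if x = 0 then 0 else if IsSquare x then 1 else -1

/-- The canonical additive character `ψ` of `F_p`, `ψ x = exp(2πi·x/p)`. -/
def addChar' (p : ℕ) (x : ZMod p) : ℂ :=
  Complex.exp (2 * Real.pi * Complex.I * (x.val : ℂ) / (p : ℂ))

/-- The set of quadratic residues mod `p` (nonzero squares), as a type. -/
abbrev QRes (p : ℕ) : Type := {b : ZMod p // b ≠ 0 ∧ IsSquare b}

/-- The Paley ETF: rows indexed by `{0} ∪ Q_p` (with `none` the `0`-row),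
columns indexed by `F_p ∪ {∞}` (with `none` the `∞`-column). -/
def PaleyETF (p : ℕ) : Matrix (Option (QRes p)) (Option (ZMod p)) ℂ :=
  fun r c =>
    match r, c with
    | none, none => 1
    | none, some _ => ((1 / Real.sqrt p : ℝ) : ℂ)
    | some _, none => 0
    | some b, some a => ((Real.sqrt (2 / p) : ℝ) : ℂ) * addChar' p (b.1 * a)

/-- `(K, δ)`-restricted isometry property for a complex matrix: for every vector `x`
with at most `K` nonzero entries, `(1-δ)‖x‖² ≤ ‖Φx‖² ≤ (1+δ)‖x‖²`. -/
def HasRIP {M N : Type*} [Fintype M] [Fintype N] (Φ : Matrix M N ℂ) (K δ : ℝ) : Prop :=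
  ∀ x : N → ℂ, ((Finset.univ.filter fun n => x n ≠ 0).card : ℝ) ≤ K →
    (1 - δ) * ∑ n, ‖x n‖ ^ 2 ≤ ∑ m, ‖∑ n, Φ m n * x n‖ ^ 2 ∧
      ∑ m, ‖∑ n, Φ m n * x n‖ ^ 2 ≤ (1 + δ) * ∑ n, ‖x n‖ ^ 2

/-- The Paley graph extractor: `Ext_p(x,y) = 1` if `x = y`, and `(χ(x−y)+1)/2` otherwise
(which is `1` iff `x − y` is a nonzero square, `0` otherwise). -/
def paleyExt (p : ℕ) (x y : ZMod p) : ℕ :=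
  if x = y then 1 else if IsSquare (x - y) then 1 else 0

/-- Indicator vector of `U ⊆ F_p` with respect to the column indexing of the Paley ETF
(entry `0` in the `∞` coordinate). -/
def indic (p : ℕ) (U : Finset (ZMod p)) : Option (ZMod p) → ℂ :=
  fun c => match c with
  | none => 0
  | some a => if a ∈ U then 1 else 0

/-!
Let `χ` be the quadratic character, `g` its Gauss sum and `B(f, h) = ∑ f x * h y * χ (x - y)`.
Since `1 + 2 ∑_{b ∈ Q_p} ψ(b c) = p [c = 0] + χ(c) g`, for real `f` on `F_p` one has
`‖Φ_p f‖² = ‖f‖² + (g / p) B(f, f)` with `|g| = √p`, so the RIP bounds `|B(f, f)|` by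
`δ √p ‖f‖²` for sparse `f`. As `p ≡ 1 (mod 4)`, `χ` is even and `B` symmetric, and polarization
bounds `B` on pairs of flat sources of size `s ≈ p^α` by `δ √p / s`. By the bathtub principle a
linear functional is maximized over sources with `max μ ≤ 1 / s` at a flat source of size `s`,
so the bound holds for all pairs of sources. Finally `Pr[Ext_p(X, Y) = 1]` equals
`1 / 2 + (B(μ, ν) + Pr[X = Y]) / 2`.
-/

open Matrix

section FlatSource

variable {ι : Type*} [Fintype ι]

def flatSource (S : Finset ι) : ι → ℝ := fun x => if x ∈ S then (#S : ℝ)⁻¹ else 0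

lemma flatSource_dotProduct_self (S : Finset ι) : flatSource S ⬝ᵥ flatSource S = (#S : ℝ)⁻¹ := by
  rcases S.eq_empty_or_nonempty with rfl | hS
  · simp [flatSource, dotProduct]
  · simp only [flatSource, dotProduct, mul_ite, ite_mul, mul_zero, zero_mul, sum_ite_mem,
      univ_inter, inter_self, sum_const, nsmul_eq_mul]
    have : (#S : ℝ) ≠ 0 := Nat.cast_ne_zero.2 (card_pos.2 hS).ne'
    field_simp

-- An `s`-subset of maximal `c`-sum: exchanging `x ∈ S` for `y ∉ S` cannot increase the sum.
lemma Finset.exists_card_eq_forall_le (c : ι → ℝ) {s : ℕ} (hs : s ≤ Fintype.card ι) :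
    ∃ S : Finset ι, #S = s ∧ ∀ x ∈ S, ∀ y ∉ S, c y ≤ c x := by
  obtain ⟨S, hS, hmax⟩ := (powersetCard s (univ : Finset ι)).exists_max_image
    (fun S => ∑ x ∈ S, c x) (powersetCard_nonempty.2 (by simpa using hs))
  refine ⟨S, (mem_powersetCard.1 hS).2, fun x hx y hy => ?_⟩
  by_contra! hlt
  have hswap : insert y (S.erase x) ∈ powersetCard s univ := by
    rw [mem_powersetCard, card_insert_of_notMem (fun h => hy (mem_of_mem_erase h)),
      card_erase_of_mem hx, ← (mem_powersetCard.1 hS).2]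
    exact ⟨subset_univ _, Nat.sub_add_cancel (card_pos.2 ⟨x, hx⟩)⟩
  have := hmax _ hswap
  rw [sum_insert (fun h => hy (mem_of_mem_erase h)), ← add_sum_erase S c hx] at this
  linarith

variable {s : ℕ} {μ : ι → ℝ}

lemma le_card_of_sum_eq_one_of_le_inv (hs : 0 < s) (hμs : ∀ x, μ x ≤ (s : ℝ)⁻¹)
    (hμ1 : ∑ x, μ x = 1) : s ≤ Fintype.card ι := by
  have h : (1 : ℝ) ≤ Fintype.card ι * (s : ℝ)⁻¹ := by
    simpa [hμ1] using sum_le_sum fun x (_ : x ∈ univ) => hμs x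
  rw [← div_eq_mul_inv, one_le_div (by positivity)] at h
  exact_mod_cast h

-- With `t = min_S c`, every term of `∑ (flatSource S x - μ x) * (c x - t)` is nonnegative.
lemma exists_flatSource_dotProduct_ge (c : ι → ℝ) (hs : 0 < s) (hμ0 : ∀ x, 0 ≤ μ x)
    (hμs : ∀ x, μ x ≤ (s : ℝ)⁻¹) (hμ1 : ∑ x, μ x = 1) :
    ∃ S : Finset ι, #S = s ∧ μ ⬝ᵥ c ≤ flatSource S ⬝ᵥ c := by
  obtain ⟨S, hS, htop⟩ := exists_card_eq_forall_le c (le_card_of_sum_eq_one_of_le_inv hs hμs hμ1)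
  have hne : S.Nonempty := card_pos.1 (hS ▸ hs)
  set t := S.inf' hne c
  refine ⟨S, hS, ?_⟩
  have hflat1 : ∑ x, flatSource S x = 1 := by
    simp [flatSource, sum_ite_mem, hS, hs.ne']
  have hterm : ∀ x, 0 ≤ (flatSource S x - μ x) * (c x - t) := fun x => by
    by_cases hx : x ∈ S
    · refine mul_nonneg ?_ (sub_nonneg.2 (inf'_le c hx))
      simpa [flatSource, hx, hS] using hμs x
    · refine mul_nonneg_of_nonpos_of_nonpos ?_
        (sub_nonpos.2 (le_inf' hne c fun z hz => htop z hz x hx))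
      simpa [flatSource, hx] using hμ0 x
  have key : flatSource S ⬝ᵥ c - μ ⬝ᵥ c = ∑ x, (flatSource S x - μ x) * (c x - t) := by
    simp only [dotProduct, sub_mul, mul_sub, sum_sub_distrib, ← sum_mul, hflat1, hμ1]
    ring
  linarith [sum_nonneg fun x (_ : x ∈ univ) => hterm x]

lemma abs_dotProduct_le_of_flatSource {c : ι → ℝ} {C : ℝ} (hs : 0 < s) (hμ0 : ∀ x, 0 ≤ μ x)
    (hμs : ∀ x, μ x ≤ (s : ℝ)⁻¹) (hμ1 : ∑ x, μ x = 1)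
    (hC : ∀ S : Finset ι, #S = s → |flatSource S ⬝ᵥ c| ≤ C) : |μ ⬝ᵥ c| ≤ C := by
  obtain ⟨S, hS, hle⟩ := exists_flatSource_dotProduct_ge c hs hμ0 hμs hμ1
  obtain ⟨T, hT, hge⟩ := exists_flatSource_dotProduct_ge (-c) hs hμ0 hμs hμ1
  simp only [dotProduct_neg, neg_le_neg_iff] at hge
  exact abs_le.2 ⟨by linarith [neg_abs_le (flatSource T ⬝ᵥ c), hC T hT],
    by linarith [le_abs_self (flatSource S ⬝ᵥ c), hC S hS]⟩

lemma abs_dotProduct_mulVec_le_of_flatSource (A : Matrix ι ι ℝ) {ν : ι → ℝ} {C : ℝ} (hs : 0 < s)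
    (hμ0 : ∀ x, 0 ≤ μ x) (hμs : ∀ x, μ x ≤ (s : ℝ)⁻¹) (hμ1 : ∑ x, μ x = 1)
    (hν0 : ∀ x, 0 ≤ ν x) (hνs : ∀ x, ν x ≤ (s : ℝ)⁻¹) (hν1 : ∑ x, ν x = 1)
    (hC : ∀ S T : Finset ι, #S = s → #T = s → |flatSource S ⬝ᵥ A *ᵥ flatSource T| ≤ C) :
    |μ ⬝ᵥ A *ᵥ ν| ≤ C := by
  refine abs_dotProduct_le_of_flatSource hs hμ0 hμs hμ1 fun S hS => ?_
  rw [dotProduct_mulVec, dotProduct_comm]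
  refine abs_dotProduct_le_of_flatSource hs hν0 hνs hν1 fun T hT => ?_
  rw [dotProduct_comm, ← dotProduct_mulVec]
  exact hC S T hS hT

end FlatSource

lemma abs_dotProduct_mulVec_le_of_transpose_eq {ι : Type*} [Fintype ι] {A : Matrix ι ι ℝ}
    (hA : Aᵀ = A) {f g : ι → ℝ} {κ : ℝ}
    (hadd : |(f + g) ⬝ᵥ A *ᵥ (f + g)| ≤ κ * ((f + g) ⬝ᵥ (f + g)))
    (hsub : |(f - g) ⬝ᵥ A *ᵥ (f - g)| ≤ κ * ((f - g) ⬝ᵥ (f - g))) :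
    |f ⬝ᵥ A *ᵥ g| ≤ κ * (f ⬝ᵥ f + g ⬝ᵥ g) / 2 := by
  have hsymm : g ⬝ᵥ A *ᵥ f = f ⬝ᵥ A *ᵥ g := by
    rw [dotProduct_mulVec, ← mulVec_transpose, hA, dotProduct_comm]
  simp only [add_dotProduct, dotProduct_add, sub_dotProduct, dotProduct_sub, mulVec_add,
    mulVec_sub, hsymm, dotProduct_comm g f] at hadd hsub
  rw [abs_le] at hadd hsub ⊢
  constructor <;> linarith

section Paley

variable {p : ℕ}

def embedVec (f : ZMod p → ℝ) : Option (ZMod p) → ℂ := fun c => c.elim 0 fun a => (f a : ℂ)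

lemma card_filter_embedVec_ne_zero [NeZero p] (f : ZMod p → ℝ) :
    #{n | embedVec f n ≠ 0} = #{a | f a ≠ 0} := by
  have h : ({n | embedVec f n ≠ 0} : Finset _) = ({a | f a ≠ 0} : Finset _).map .some := by
    ext (_ | a) <;> rw [mem_filter] <;> simp [embedVec]
  rw [h, card_map]

lemma sum_sq_norm_embedVec [NeZero p] (f : ZMod p → ℝ) : ∑ n, ‖embedVec f n‖ ^ 2 = f ⬝ᵥ f := by
  simp [Fintype.sum_option, embedVec, dotProduct, sq]

def quadCirculant (p : ℕ) : Matrix (ZMod p) (ZMod p) ℝ := circulant fun x => (quadChar p x : ℝ)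

lemma sum_sum_mul_paleyExt_eq [NeZero p] (μ ν : ZMod p → ℝ) (hμ1 : ∑ x, μ x = 1)
    (hν1 : ∑ x, ν x = 1) :
    ∑ x, ∑ y, μ x * ν y * (if paleyExt p x y = 1 then (1 : ℝ) else 0) =
      1 / 2 + (μ ⬝ᵥ quadCirculant p *ᵥ ν + μ ⬝ᵥ ν) / 2 := by
  have hpt : ∀ x y : ZMod p, μ x * ν y * (if paleyExt p x y = 1 then (1 : ℝ) else 0) =
      μ x * ν y / 2 + μ x * (quadChar p (x - y) * ν y) / 2 +
        (if x = y then μ x * ν y else 0) / 2 := by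
    intro x y
    by_cases hxy : x = y
    · simp [hxy, paleyExt, quadChar]
    · by_cases hsq : IsSquare (x - y)
      · simp [paleyExt, quadChar, hxy, sub_eq_zero, hsq]
      · simp only [paleyExt, hxy, ↓reduceIte, hsq, zero_ne_one, mul_zero, quadChar, sub_eq_zero,
          Int.reduceNeg, Int.cast_neg, Int.cast_one, neg_mul, one_mul, mul_neg, zero_div, add_zero]
        ring
  simp only [hpt, sum_add_distrib, ← sum_div, ← mul_sum, hν1, sum_ite_eq, mem_univ, if_true,
    dotProduct, mulVec, quadCirculant, circulant_apply]
  simp only [mul_one, hμ1]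
  ring

lemma ringChar_zmod_ne_two (hp : p % 4 = 1) : ringChar (ZMod p) ≠ 2 := by
  rw [ZMod.ringChar_zmod_n]; omega

variable [Fact p.Prime]

lemma addChar'_eq_stdAddChar (x : ZMod p) : addChar' p x = ZMod.stdAddChar x := by
  rw [ZMod.stdAddChar_apply, ZMod.toCircle_apply, addChar']

lemma quadChar_eq_quadraticChar (x : ZMod p) : quadChar p x = quadraticChar (ZMod p) x := by
  simp only [quadChar, quadraticChar_apply, quadraticCharFun]
  congr

def complexQuadChar (p : ℕ) [Fact p.Prime] : MulChar (ZMod p) ℂ :=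
  (quadraticChar (ZMod p)).ringHomComp (Int.castRingHom ℂ)

def quadGaussSum (p : ℕ) [Fact p.Prime] : ℂ := gaussSum (complexQuadChar p) ZMod.stdAddChar

lemma complexQuadChar_apply (x : ZMod p) : complexQuadChar p x = quadChar p x := by
  simp [complexQuadChar, quadChar_eq_quadraticChar]

-- The `0`-row is written as the frequency-`0` sum so that all rows expand alike.
lemma sum_sq_norm_paleyETF_mulVec (f : ZMod p → ℝ) :
    ∑ m, ‖∑ n, PaleyETF p m n * embedVec f n‖ ^ 2 =
      (‖∑ a, (f a : ℂ) * ZMod.stdAddChar (0 * a)‖ ^ 2 +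
        2 * ∑ b : QRes p, ‖∑ a, (f a : ℂ) * ZMod.stdAddChar (b.1 * a)‖ ^ 2) / p := by
  simp only [Fintype.sum_option, PaleyETF, embedVec, addChar'_eq_stdAddChar, Option.elim,
    mul_zero, zero_add, mul_assoc, ← mul_sum, norm_mul, mul_pow, Complex.norm_real,
    Real.norm_eq_abs, sq_abs, zero_mul, AddChar.map_zero_eq_one, mul_one]
  simp_rw [mul_comm (ZMod.stdAddChar _)]
  rw [div_pow, one_pow, Real.sq_sqrt (by positivity), Real.sq_sqrt (by positivity)]
  ring

lemma sq_norm_sum_mul_stdAddChar (f : ZMod p → ℝ) (y : ZMod p) :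
    (‖∑ a, (f a : ℂ) * ZMod.stdAddChar (y * a)‖ : ℂ) ^ 2 =
      ∑ a, ∑ a', (f a : ℂ) * f a' * ZMod.stdAddChar (y * (a - a')) := by
  rw [← Complex.mul_conj', map_sum, sum_mul_sum]
  refine sum_congr rfl fun a _ => sum_congr rfl fun a' _ => ?_
  rw [RingHom.map_mul, Complex.conj_ofReal, ← AddChar.map_neg_eq_conj, mul_sub, sub_eq_add_neg,
    AddChar.map_add_eq_mul, ← mul_neg]
  ring

lemma complexQuadChar_isQuadratic : (complexQuadChar p).IsQuadratic :=
  (quadraticChar_isQuadratic (ZMod p)).comp (Int.castRingHom ℂ)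

variable (hp : p % 4 = 1)
include hp

lemma quadChar_neg (x : ZMod p) : quadChar p (-x) = quadChar p x := by
  have h : quadraticChar (ZMod p) (-1) = 1 :=
    (quadraticChar_one_iff_isSquare (neg_ne_zero.2 one_ne_zero)).2
      (ZMod.exists_sq_eq_neg_one_iff.2 (by omega))
  rw [quadChar_eq_quadraticChar, quadChar_eq_quadraticChar, neg_eq_neg_one_mul, map_mul, h, one_mul]

lemma sum_complexQuadChar_mul_stdAddChar (c : ZMod p) :
    ∑ b, complexQuadChar p b * ZMod.stdAddChar (c * b) =
      complexQuadChar p c * quadGaussSum p := by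
  rcases eq_or_ne c 0 with rfl | hc
  · have hsum : ∑ b, complexQuadChar p b = 0 := by
      simpa [complexQuadChar] using
        congrArg (Int.cast : ℤ → ℂ) (quadraticChar_sum_zero (ringChar_zmod_ne_two hp))
    simp [hsum, MulChar.map_zero]
  · have := gaussSum_mulShift_eq (complexQuadChar p) ZMod.stdAddChar (Units.mk0 c hc)
    rw [complexQuadChar_isQuadratic.inv] at this
    simpa [quadGaussSum, gaussSum, AddChar.mulShift_apply] using this

lemma sq_norm_quadGaussSum : ‖quadGaussSum p‖ ^ 2 = p := by
  have hne : complexQuadChar p ≠ 1 := (MulChar.ringHomComp_ne_one_iff Int.cast_injective).2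
    (quadraticChar_ne_one (ringChar_zmod_ne_two hp))
  have hneg : complexQuadChar p (-1) = 1 := by
    rw [complexQuadChar_apply, quadChar_neg hp, quadChar, if_neg one_ne_zero, if_pos IsSquare.one,
      Int.cast_one]
  rw [quadGaussSum, ← norm_pow,
    gaussSum_sq hne complexQuadChar_isQuadratic (ZMod.isPrimitive_stdAddChar p), hneg, one_mul,
    ZMod.card]
  simp

-- The indicator of `Q_p` is `(1 + χ - [· = 0]) / 2`.
lemma one_add_two_mul_sum_qRes (c : ZMod p) :
    1 + 2 * ∑ b : QRes p, ZMod.stdAddChar (c * b.1) =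
      (if c = 0 then (p : ℂ) else 0) + complexQuadChar p c * quadGaussSum p := by
  have hsplit : ∀ b : ZMod p, (1 + complexQuadChar p b) * ZMod.stdAddChar (c * b) =
      (if b = 0 then 1 else 0) + 2 * if b ≠ 0 ∧ IsSquare b then ZMod.stdAddChar (c * b) else 0 := by
    intro b
    rw [complexQuadChar_apply, quadChar]
    by_cases hb : b = 0
    · simp [hb]
    · by_cases hsq : IsSquare b <;>
        simp only [hb, hsq, ne_eq, not_false_eq_true, and_true, and_false, if_false, if_true] <;>
        push_cast <;> ring
  have hsum := Finset.sum_congr rfl fun b (_ : b ∈ univ) => hsplit b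
  simp only [add_mul, one_mul, sum_add_distrib, ← mul_sum, sum_ite_eq', mem_univ, if_true] at hsum
  rw [← sum_filter, sum_subtype _ (fun _ => mem_filter.trans (and_iff_right (mem_univ _)))] at hsum
  rw [← hsum, sum_complexQuadChar_mul_stdAddChar hp]
  simp_rw [mul_comm c]
  rw [AddChar.sum_mulShift c (ZMod.isPrimitive_stdAddChar p), ZMod.card]
  split_ifs <;> simp

lemma sum_sq_norm_paleyETF_mulVec_sub_eq (f : ZMod p → ℝ) :
    ((∑ m, ‖∑ n, PaleyETF p m n * embedVec f n‖ ^ 2 - f ⬝ᵥ f : ℝ) : ℂ) =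
      quadGaussSum p / p * (f ⬝ᵥ quadCirculant p *ᵥ f : ℝ) := by
  have hp0 : (p : ℂ) ≠ 0 := Nat.cast_ne_zero.2 (Fact.out : p.Prime).ne_zero
  calc ((∑ m, ‖∑ n, PaleyETF p m n * embedVec f n‖ ^ 2 - f ⬝ᵥ f : ℝ) : ℂ)
      = (∑ a, ∑ a', (f a : ℂ) * f a' *
            (1 + 2 * ∑ b : QRes p, ZMod.stdAddChar (b.1 * (a - a')))) / p
          - ∑ a, (f a : ℂ) * f a := by
        rw [sum_sq_norm_paleyETF_mulVec]
        push_cast [dotProduct, sq_norm_sum_mul_stdAddChar]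
        congr 2
        simp only [zero_mul, AddChar.map_zero_eq_one, mul_one, mul_add, sum_add_distrib, mul_sum]
        congr 1
        rw [sum_comm]
        refine sum_congr rfl fun a _ => ?_
        rw [sum_comm]
        exact sum_congr rfl fun a' _ => sum_congr rfl fun b _ => by ring
    _ = (∑ a, ∑ a', (f a : ℂ) * f a' *
            ((if a = a' then (p : ℂ) else 0) + complexQuadChar p (a - a') * quadGaussSum p)) / p
          - ∑ a, (f a : ℂ) * f a := by
        simp_rw [mul_comm _ (_ - _), one_add_two_mul_sum_qRes hp, sub_eq_zero]
    _ = quadGaussSum p / p * ∑ a, ∑ a', (f a : ℂ) * f a' * complexQuadChar p (a - a') := by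
        simp only [mul_add, sum_add_distrib, mul_ite, mul_zero, sum_ite_eq, mem_univ, if_true]
        rw [add_div, ← sum_mul, mul_div_cancel_right₀ _ hp0, add_sub_cancel_left, sum_div, mul_sum]
        refine sum_congr rfl fun a _ => ?_
        rw [sum_div, mul_sum]
        exact sum_congr rfl fun a' _ => by ring
    _ = quadGaussSum p / p * (f ⬝ᵥ quadCirculant p *ᵥ f : ℝ) := by
        push_cast [dotProduct, mulVec, quadCirculant, circulant_apply, complexQuadChar_apply,
          mul_sum]
        exact sum_congr rfl fun a _ => sum_congr rfl fun a' _ => by ring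

lemma abs_dotProduct_quadCirculant_mulVec_self_le {K δ : ℝ} (hRIP : HasRIP (PaleyETF p) K δ)
    (f : ZMod p → ℝ) (hf : (#{a | f a ≠ 0} : ℝ) ≤ K) :
    |f ⬝ᵥ quadCirculant p *ᵥ f| ≤ δ * √p * (f ⬝ᵥ f) := by
  have hp0 : (0 : ℝ) < p := Nat.cast_pos.2 (Fact.out : p.Prime).pos
  obtain ⟨hlow, hup⟩ := hRIP (embedVec f) (by rwa [card_filter_embedVec_ne_zero])
  rw [sum_sq_norm_embedVec] at hlow hup
  have hdev : |∑ m, ‖∑ n, PaleyETF p m n * embedVec f n‖ ^ 2 - f ⬝ᵥ f| ≤ δ * (f ⬝ᵥ f) :=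
    abs_sub_le_iff.2 ⟨by linarith, by linarith⟩
  have hnorm : ‖quadGaussSum p‖ = √p := by
    rw [← sq_norm_quadGaussSum hp, Real.sqrt_sq (norm_nonneg _)]
  have hid := congrArg norm (sum_sq_norm_paleyETF_mulVec_sub_eq hp f)
  rw [Complex.norm_real, Real.norm_eq_abs, norm_mul, norm_div, hnorm, Complex.norm_natCast,
    Complex.norm_real, Real.norm_eq_abs] at hid
  rw [hid, div_mul_eq_mul_div, div_le_iff₀ hp0] at hdev
  refine le_of_mul_le_mul_left ?_ (Real.sqrt_pos.2 hp0)
  calc √p * |f ⬝ᵥ quadCirculant p *ᵥ f| ≤ δ * (f ⬝ᵥ f) * p := hdev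
    _ = √p * (δ * √p * (f ⬝ᵥ f)) := by
      linear_combination (δ * (f ⬝ᵥ f)) * (Real.mul_self_sqrt hp0.le).symm

lemma quadCirculant_transpose : (quadCirculant p)ᵀ = quadCirculant p := by
  simp only [quadCirculant, transpose_circulant, quadChar_neg hp]

lemma abs_flatSource_dotProduct_quadCirculant_mulVec_le {K δ : ℝ} {s : ℕ}
    (hRIP : HasRIP (PaleyETF p) K δ) (hK : 2 * (s : ℝ) ≤ K) {S T : Finset (ZMod p)}
    (hS : #S = s) (hT : #T = s) :
    |flatSource S ⬝ᵥ quadCirculant p *ᵥ flatSource T| ≤ δ * √p / s := by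
  have hsupp : ∀ h : ZMod p → ℝ, (∀ x, x ∉ S → x ∉ T → h x = 0) → (#{x | h x ≠ 0} : ℝ) ≤ K := by
    intro h hh
    have hsub : ({x | h x ≠ 0} : Finset (ZMod p)) ⊆ S ∪ T := fun x hx => by
      by_contra hxST
      simp_all
    calc (#{x | h x ≠ 0} : ℝ) ≤ #(S ∪ T) := Nat.cast_le.2 (card_le_card hsub)
      _ ≤ #S + #T := by exact_mod_cast card_union_le S T
      _ ≤ K := by rw [hS, hT]; linarith
  have hbound := abs_dotProduct_mulVec_le_of_transpose_eq (f := flatSource S) (g := flatSource T)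
    (quadCirculant_transpose hp)
    (abs_dotProduct_quadCirculant_mulVec_self_le hp hRIP _ (hsupp _ fun x hxS hxT => by
      simp [flatSource, hxS, hxT]))
    (abs_dotProduct_quadCirculant_mulVec_self_le hp hRIP _ (hsupp _ fun x hxS hxT => by
      simp [flatSource, hxS, hxT]))
  rw [flatSource_dotProduct_self, flatSource_dotProduct_self, hS, hT] at hbound
  calc _ ≤ _ := hbound
    _ = δ * √p / s := by ring

lemma abs_sum_sum_mul_paleyExt_sub_half_le {K δ M : ℝ} {s : ℕ} (hRIP : HasRIP (PaleyETF p) K δ)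
    (hs : 0 < s) (hK : 2 * (s : ℝ) ≤ K) (hM : M ≤ (s : ℝ)⁻¹) {μ ν : ZMod p → ℝ}
    (hμ0 : ∀ x, 0 ≤ μ x) (hν0 : ∀ x, 0 ≤ ν x) (hμ1 : ∑ x, μ x = 1) (hν1 : ∑ x, ν x = 1)
    (hμM : ∀ x, μ x ≤ M) (hνM : ∀ x, ν x ≤ M) :
    |∑ x, ∑ y, μ x * ν y * (if paleyExt p x y = 1 then (1 : ℝ) else 0) - 1 / 2| ≤
      (δ * √p / s + M) / 2 := by
  have hB : |μ ⬝ᵥ quadCirculant p *ᵥ ν| ≤ δ * √p / s :=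
    abs_dotProduct_mulVec_le_of_flatSource _ hs hμ0 (fun x => (hμM x).trans hM) hμ1 hν0
      (fun x => (hνM x).trans hM) hν1 fun S T hS hT =>
        abs_flatSource_dotProduct_quadCirculant_mulVec_le hp hRIP hK hS hT
  have hdiag : μ ⬝ᵥ ν ≤ M := calc
    μ ⬝ᵥ ν ≤ ∑ x, μ x * M := sum_le_sum fun x _ => mul_le_mul_of_nonneg_left (hνM x) (hμ0 x)
    _ = M := by rw [← sum_mul, hμ1, one_mul]
  have hdiag0 : 0 ≤ μ ⬝ᵥ ν := sum_nonneg fun x _ => mul_nonneg (hμ0 x) (hν0 x)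
  rw [sum_sum_mul_paleyExt_eq μ ν hμ1 hν1, add_sub_cancel_left]
  rw [abs_le] at hB ⊢
  constructor <;> linarith

end Paley

lemma rpow_le_two_rpow_mul_clog {α : ℝ} (hα : 0 ≤ α) (p : ℕ) :
    (p : ℝ) ^ α ≤ 2 ^ (α * Nat.clog 2 p) := by
  rw [mul_comm, Real.rpow_mul zero_le_two, Real.rpow_natCast]
  exact Real.rpow_le_rpow (Nat.cast_nonneg p) (by exact_mod_cast Nat.le_pow_clog one_lt_two p) hα

lemma two_rpow_neg_mul_clog_le {α : ℝ} (hα : 0 ≤ α) {p : ℕ} (hp : 0 < p) :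
    (2 : ℝ) ^ (-(α * Nat.clog 2 p)) ≤ (p : ℝ) ^ (-α) := by
  rw [Real.rpow_neg zero_le_two, Real.rpow_neg (Nat.cast_nonneg p)]
  exact inv_anti₀ (by positivity) (rpow_le_two_rpow_mul_clog hα p)

lemma two_rpow_mul_clog_le {α : ℝ} (hα0 : 0 ≤ α) (hα1 : α ≤ 1) {p : ℕ} (hp : 1 < p) :
    (2 : ℝ) ^ (α * Nat.clog 2 p) ≤ 2 * (p : ℝ) ^ α := by
  have hpow : 2 ^ Nat.clog 2 p ≤ 2 * p := by
    have := Nat.pow_pred_clog_lt_self one_lt_two hp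
    rw [← Nat.succ_pred_eq_of_pos (Nat.clog_pos one_lt_two hp), pow_succ]
    omega
  calc (2 : ℝ) ^ (α * Nat.clog 2 p) = ((2 ^ Nat.clog 2 p : ℕ) : ℝ) ^ α := by
        rw [mul_comm, Real.rpow_mul zero_le_two, Real.rpow_natCast, Nat.cast_pow, Nat.cast_ofNat]
    _ ≤ (2 * p : ℝ) ^ α := Real.rpow_le_rpow (Nat.cast_nonneg _) (by exact_mod_cast hpow) hα0
    _ = 2 ^ α * (p : ℝ) ^ α := Real.mul_rpow zero_le_two (Nat.cast_nonneg p)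
    _ ≤ 2 * (p : ℝ) ^ α := by
        gcongr
        simpa using Real.rpow_le_rpow_of_exponent_le one_le_two hα1

lemma exists_nat_le_le_two_mul {X : ℝ} (hX : 1 ≤ X) : ∃ s : ℕ, 0 < s ∧ (s : ℝ) ≤ X ∧ X ≤ 2 * s := by
  have hfloor : 1 ≤ ⌊X⌋₊ := Nat.one_le_floor_iff X |>.2 hX
  refine ⟨⌊X⌋₊, hfloor, Nat.floor_le (by linarith), ?_⟩
  have := Nat.lt_floor_add_one X
  have : (1 : ℝ) ≤ ⌊X⌋₊ := by exact_mod_cast hfloor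
  linarith

lemma rpow_neg_mul_sqrt_div_le {x s α τ : ℝ} (hx : 0 < x) (hs : x ^ α ≤ 2 * s) :
    x ^ (-τ) * √x / s ≤ 2 * x ^ (-τ + 1 / 2 - α) := calc
  x ^ (-τ) * √x / s ≤ x ^ (-τ) * √x / (x ^ α / 2) :=
    div_le_div_of_nonneg_left (by positivity) (by positivity) (by linarith)
  _ = 2 * x ^ (-τ + 1 / 2 - α) := by
    rw [Real.rpow_sub hx, Real.rpow_add hx, Real.sqrt_eq_rpow]
    ring

theorem paley_rip_implies_extractor_general (ε τ γ : ℝ)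
    (hε : 0 < ε) (hγτ : γ < τ)
    (hcomp : ε ≤ 1 / 2 - τ + γ) :
    ∃ p₀ : ℕ, ∀ (p : ℕ) [Fact p.Prime], p % 4 = 1 → p₀ ≤ p →
      HasRIP (PaleyETF p) ((p : ℝ) ^ ((1 : ℝ) / 2 + ε)) ((p : ℝ) ^ (-τ)) →
      ∀ μ ν : ZMod p → ℝ,
        (∀ x, 0 ≤ μ x) → (∀ x, 0 ≤ ν x) →
        (∑ x : ZMod p, μ x = 1) → (∑ x : ZMod p, ν x = 1) →
        (∀ x, μ x ≤ (2 : ℝ) ^ (-(((1 : ℝ) / 2 - τ + γ) * (Nat.clog 2 p : ℝ)))) →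
        (∀ x, ν x ≤ (2 : ℝ) ^ (-(((1 : ℝ) / 2 - τ + γ) * (Nat.clog 2 p : ℝ)))) →
        |(∑ x : ZMod p, ∑ y : ZMod p,
            μ x * ν y * (if paleyExt p x y = 1 then (1 : ℝ) else 0)) - 1 / 2| ≤
          2 * (p : ℝ) ^ (-(min γ (0.05 * ε ^ 2))) +
            (p : ℝ) ^ (-((1 : ℝ) / 2 - τ + γ)) / 2 := by
  have hgap : 0 < ε + τ - γ := by linarith
  have hα1 : (1 : ℝ) / 2 - τ + γ ≤ 1 := by linarith
  set α := (1 : ℝ) / 2 - τ + γ with hα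
  have hα0 : 0 < α := hε.trans_le hcomp
  obtain ⟨p₀, hp₀⟩ := Filter.eventually_atTop.1 <|
    (((tendsto_rpow_atTop hgap).comp tendsto_natCast_atTop_atTop).eventually_ge_atTop 4).and
      (Filter.eventually_ge_atTop 2)
  refine ⟨p₀, fun p _ hp hpp₀ hRIP μ ν hμ0 hν0 hμ1 hν1 hμ hν => ?_⟩
  obtain ⟨hp4 : 4 ≤ (p : ℝ) ^ (ε + τ - γ), hp2 : 2 ≤ p⟩ := hp₀ p hpp₀
  have hp1 : (1 : ℝ) ≤ p := by exact_mod_cast one_le_two.trans hp2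
  have hpX := rpow_le_two_rpow_mul_clog hα0.le p
  obtain ⟨s, hs0, hsX, hXs⟩ := exists_nat_le_le_two_mul ((Real.one_le_rpow hp1 hα0.le).trans hpX)
  have hK : 2 * (s : ℝ) ≤ (p : ℝ) ^ (1 / 2 + ε) := by
    rw [show (1 : ℝ) / 2 + ε = (ε + τ - γ) + α by ring, Real.rpow_add (by linarith)]
    nlinarith [two_rpow_mul_clog_le hα0.le hα1 hp2, Real.rpow_nonneg (Nat.cast_nonneg p) α]
  have hM : (2 : ℝ) ^ (-(α * Nat.clog 2 p)) ≤ (s : ℝ)⁻¹ := by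
    rw [Real.rpow_neg zero_le_two]
    exact inv_anti₀ (by exact_mod_cast hs0) hsX
  refine (abs_sum_sum_mul_paleyExt_sub_half_le hp hRIP hs0 hK hM hμ0 hν0 hμ1 hν1 hμ hν).trans ?_
  have hbias : (p : ℝ) ^ (-τ) * √p / s ≤ 2 * (p : ℝ) ^ (-γ) :=
    (rpow_neg_mul_sqrt_div_le (by positivity) (hpX.trans hXs)).trans_eq (by rw [hα]; ring_nf)
  have hβ : (p : ℝ) ^ (-γ) ≤ (p : ℝ) ^ (-min γ (0.05 * ε ^ 2)) :=
    Real.rpow_le_rpow_of_exponent_le hp1 (neg_le_neg (min_le_left _ _))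
  have hdiag := two_rpow_neg_mul_clog_le hα0.le (p := p) (by omega)
  linarith [Real.rpow_nonneg (Nat.cast_nonneg p) (-min γ (0.05 * ε ^ 2))]

/-- **Corollary: RIP for the Paley ETF makes the Paley extractor break the half barrier.**
Let `ε, τ > 0`, `0 < γ < τ` with `ε ≤ 1/2 − τ + γ`; set `α = 1/2 − τ + γ` and
`β = min(γ, 0.05·ε²)`. Then for all sufficiently large primes `p ≡ 1 (mod 4)`:
if `Φ_p` has the `(p^{1/2+ε}, p^{−τ})`-RIP, then for any two independent sources on `F_p`
with min-entropy at least `α·n`, `n = ⌈log₂ p⌉`, the bias of `Ext_p` is at most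
`2·p^{−β} + p^{−α}/2`. Sources are modelled as probability mass functions, and
`Pr[Ext_p(X,Y) = 1] = ∑_{x,y} μ(x)·ν(y)·[Ext_p(x,y) = 1]`. -/
theorem paley_rip_implies_extractor (ε τ γ : ℝ)
    (hε : 0 < ε) (hτ : 0 < τ) (hγ0 : 0 < γ) (hγτ : γ < τ)
    (hcomp : ε ≤ 1 / 2 - τ + γ) :
    ∃ p₀ : ℕ, ∀ (p : ℕ) [Fact p.Prime], p % 4 = 1 → p₀ ≤ p →
      HasRIP (PaleyETF p) ((p : ℝ) ^ ((1 : ℝ) / 2 + ε)) ((p : ℝ) ^ (-τ)) →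
      ∀ μ ν : ZMod p → ℝ,
        (∀ x, 0 ≤ μ x) → (∀ x, 0 ≤ ν x) →
        (∑ x : ZMod p, μ x = 1) → (∑ x : ZMod p, ν x = 1) →
        (∀ x, μ x ≤ (2 : ℝ) ^ (-(((1 : ℝ) / 2 - τ + γ) * (Nat.clog 2 p : ℝ)))) →
        (∀ x, ν x ≤ (2 : ℝ) ^ (-(((1 : ℝ) / 2 - τ + γ) * (Nat.clog 2 p : ℝ)))) →
        |(∑ x : ZMod p, ∑ y : ZMod p,
            μ x * ν y * (if paleyExt p x y = 1 then (1 : ℝ) else 0)) - 1 / 2| ≤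
          2 * (p : ℝ) ^ (-(min γ (0.05 * ε ^ 2))) +
            (p : ℝ) ^ (-((1 : ℝ) / 2 - τ + γ)) / 2 :=
  paley_rip_implies_extractor_general ε τ γ hε hγτ hcomp
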